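/- For a GDS with no potential and no damping, i.e. (G(x,ẋ) + Ξ_G(x,ẋ)) ẍ + ξ_G(x,ẋ) = 0, the generalized kinetic energy K(x,ẋ) = ½ ẋᵀ G(x,ẋ) ẋ is conserved along any C² solution: d/dt K(x(t),ẋ(t)) = 0. -/

import Mathlib

open Matrix BigOperators

/-- Partial derivative of a scalar function on `ℝᵐ` in the `k`-th coordinate direction. -/
noncomputable def pder {m : ℕ} (f : (Fin m → ℝ) → ℝ) (x : Fin m → ℝ) (k : Fin m) : ℝ :=
  fderiv ℝ f x (Pi.single k 1)

/-- The curvature correction matrix Ξ_G(x,ẋ) = ½ Σᵢ ẋᵢ ∂_ẋ gᵢ(x,ẋ). -/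
noncomputable def XiG {m : ℕ} (G : (Fin m → ℝ) → (Fin m → ℝ) → Matrix (Fin m) (Fin m) ℝ)
    (x v : Fin m → ℝ) : Matrix (Fin m) (Fin m) ℝ :=
  Matrix.of fun j k => (1 / 2) * ∑ i, v i * pder (fun w => G x w j i) v k

/-- The curvature vector ξ_G(x,ẋ) = Ġˣ(x,ẋ)ẋ − ½∇ₓ(ẋᵀG(x,ẋ)ẋ). -/
noncomputable def xiG {m : ℕ} (G : (Fin m → ℝ) → (Fin m → ℝ) → Matrix (Fin m) (Fin m) ℝ)
    (x v : Fin m → ℝ) : Fin m → ℝ := fun i =>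
  (∑ j, (∑ k, v k * pder (fun y => G y v i j) x k) * v j)
    - (1 / 2) * pder (fun y => v ⬝ᵥ (G y v).mulVec v) x i

/-! Along a trajectory, `d/dt ½ ẋᵀGẋ = ẋᵀGẍ + ½ ẋᵀ(∂ₓG[ẋ] + ∂_ẋG[ẍ])ẋ` by symmetry of `G`.
The two correction terms of the GDS equation supply exactly the two halves:
`ẋᵀΞ_G ẍ = ½ ẋᵀ∂_ẋG[ẍ]ẋ`, and `ẋᵀξ_G = ẋᵀ∂ₓG[ẋ]ẋ - ½ ẋᵀ∂ₓG[ẋ]ẋ` because `ẋ ⬝ ∇ₓ` is the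
directional derivative along `ẋ`. Hence `dK/dt = ẋᵀ((G + Ξ_G)ẍ + ξ_G) = 0`. -/

lemma sum_mul_pder {m : ℕ} (f : (Fin m → ℝ) → ℝ) (x u : Fin m → ℝ) :
    ∑ k, u k * pder f x k = fderiv ℝ f x u := by
  conv_rhs => rw [pi_eq_sum_univ' u]
  simp [pder]

section Calculus

variable {E F H : Type*} [NormedAddCommGroup E] [NormedSpace ℝ E] [NormedAddCommGroup F]
  [NormedSpace ℝ F] [NormedAddCommGroup H] [NormedSpace ℝ H]

theorem DifferentiableAt.hasDerivAt_comp_prodMk {φ : E × F → H} {f : ℝ → E} {g : ℝ → F}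
    {f' : E} {g' : F} {t : ℝ} (hφ : DifferentiableAt ℝ φ (f t, g t)) (hf : HasDerivAt f f' t)
    (hg : HasDerivAt g g' t) :
    HasDerivAt (fun s => φ (f s, g s))
      (fderiv ℝ (fun y => φ (y, g t)) (f t) f' + fderiv ℝ (fun w => φ (f t, w)) (g t) g') t := by
  have hleft : HasFDerivAt (fun y => φ (y, g t)) ((fderiv ℝ φ (f t, g t)).comp
      (.inl ℝ E F)) (f t) := hφ.hasFDerivAt.comp (f t) (hasFDerivAt_prodMk_left (f t) (g t))
  have hright : HasFDerivAt (fun w => φ (f t, w)) ((fderiv ℝ φ (f t, g t)).comp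
      (.inr ℝ E F)) (g t) := hφ.hasFDerivAt.comp (g t) (hasFDerivAt_prodMk_right (f t) (g t))
  have hsplit : (f', g') = ContinuousLinearMap.inl ℝ E F f' + ContinuousLinearMap.inr ℝ E F g' := by
    simp
  rw [hleft.fderiv, hright.fderiv, ContinuousLinearMap.comp_apply, ContinuousLinearMap.comp_apply,
    ← map_add, ← hsplit]
  exact hφ.hasFDerivAt.comp_hasDerivAt t (hf.prodMk hg)

noncomputable def entrywiseFDeriv {m n : Type*} (M : E → Matrix m n ℝ) (y u : E) :
    Matrix m n ℝ :=
  Matrix.of fun i j => fderiv ℝ (fun z => M z i j) y u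

theorem fderiv_dotProduct_mulVec_const {m n : Type*} [Fintype m] [Fintype n]
    {M : E → Matrix m n ℝ} {y : E} (hM : ∀ i j, DifferentiableAt ℝ (fun z => M z i j) y)
    (v : m → ℝ) (w : n → ℝ) (u : E) :
    fderiv ℝ (fun z => v ⬝ᵥ M z *ᵥ w) y u = v ⬝ᵥ entrywiseFDeriv M y u *ᵥ w := by
  have h : HasFDerivAt (fun z => ∑ i, v i * ∑ j, M z i j * w j)
      (∑ i, v i • ∑ j, w j • fderiv ℝ (fun z => M z i j) y) y :=
    HasFDerivAt.fun_sum fun i _ => (HasFDerivAt.fun_sum fun j _ =>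
      (hM i j).hasFDerivAt.mul_const (w j)).const_mul (v i)
  simp only [dotProduct, mulVec]
  rw [h.fderiv]
  simp [entrywiseFDeriv, mul_comm]

end Calculus

section Curves

variable {m n : Type*} [Fintype n] {t : ℝ}

theorem HasDerivAt.dotProduct {v w : ℝ → n → ℝ} {v' w' : n → ℝ} (hv : HasDerivAt v v' t)
    (hw : HasDerivAt w w' t) :
    HasDerivAt (fun s => v s ⬝ᵥ w s) (v' ⬝ᵥ w t + v t ⬝ᵥ w') t := by
  show HasDerivAt (fun s => ∑ i, v s i * w s i) (∑ i, v' i * w t i + ∑ i, v t i * w' i) t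
  rw [← Finset.sum_add_distrib]
  exact HasDerivAt.fun_sum fun i _ => (hasDerivAt_pi.1 hv i).mul (hasDerivAt_pi.1 hw i)

theorem HasDerivAt.mulVec {M : ℝ → Matrix m n ℝ} {M' : Matrix m n ℝ} {v : ℝ → n → ℝ}
    {v' : n → ℝ} (hM : ∀ i j, HasDerivAt (fun s => M s i j) (M' i j) t)
    (hv : HasDerivAt v v' t) :
    HasDerivAt (fun s => M s *ᵥ v s) (M' *ᵥ v t + M t *ᵥ v') t :=
  hasDerivAt_pi.2 fun i => HasDerivAt.dotProduct (hasDerivAt_pi.2 (hM i)) hv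

theorem HasDerivAt.dotProduct_mulVec_self {M : ℝ → Matrix n n ℝ} {M' : Matrix n n ℝ}
    {v : ℝ → n → ℝ} {v' : n → ℝ} (hM : ∀ i j, HasDerivAt (fun s => M s i j) (M' i j) t)
    (hv : HasDerivAt v v' t) (hsym : (M t).IsSymm) :
    HasDerivAt (fun s => v s ⬝ᵥ M s *ᵥ v s) (2 * (v t ⬝ᵥ M t *ᵥ v') + v t ⬝ᵥ M' *ᵥ v t) t := by
  convert hv.dotProduct (HasDerivAt.mulVec hM hv) using 1
  have hswap : v' ⬝ᵥ M t *ᵥ v t = v t ⬝ᵥ M t *ᵥ v' := by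
    rw [← dotProduct_transpose_mulVec, hsym.eq]
  rw [hswap, dotProduct_add]
  ring

end Curves

section GDS

variable {m : ℕ} (G : (Fin m → ℝ) → (Fin m → ℝ) → Matrix (Fin m) (Fin m) ℝ)

theorem dotProduct_XiG_mulVec (X V A : Fin m → ℝ) :
    V ⬝ᵥ XiG G X V *ᵥ A = 1 / 2 * (V ⬝ᵥ entrywiseFDeriv (G X) V A *ᵥ V) := by
  simp only [dotProduct, mulVec, XiG, entrywiseFDeriv, Matrix.of_apply, ← sum_mul_pder,
    Finset.mul_sum, Finset.sum_mul]
  refine Finset.sum_congr rfl fun j _ => ?_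
  rw [Finset.sum_comm]
  exact Finset.sum_congr rfl fun _ _ => Finset.sum_congr rfl fun _ _ => by ring

theorem dotProduct_xiG {X V : Fin m → ℝ}
    (hG : ∀ i j, DifferentiableAt ℝ (fun y => G y V i j) X) :
    V ⬝ᵥ xiG G X V = 1 / 2 * (V ⬝ᵥ entrywiseFDeriv (fun y => G y V) X V *ᵥ V) := by
  have hquad : ∑ i, V i * pder (fun y => V ⬝ᵥ G y V *ᵥ V) X i
      = V ⬝ᵥ entrywiseFDeriv (fun y => G y V) X V *ᵥ V := by
    rw [sum_mul_pder, fderiv_dotProduct_mulVec_const hG]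
  have hGdot : ∑ i, V i * ∑ j, (∑ k, V k * pder (fun y => G y V i j) X k) * V j
      = V ⬝ᵥ entrywiseFDeriv (fun y => G y V) X V *ᵥ V := by
    simp only [sum_mul_pder]
    rfl
  have hsplit : V ⬝ᵥ xiG G X V = ∑ i, V i * ∑ j, (∑ k, V k * pder (fun y => G y V i j) X k) * V j
      - 1 / 2 * ∑ i, V i * pder (fun y => V ⬝ᵥ G y V *ᵥ V) X i := by
    simp only [xiG, dotProduct, mul_sub, Finset.sum_sub_distrib, Finset.mul_sum]
    ring_nf
  rw [hsplit, hquad, hGdot]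
  ring

theorem dotProduct_gds_eq_energyRate {X V : Fin m → ℝ}
    (hG : ∀ i j, DifferentiableAt ℝ (fun y => G y V i j) X) (A : Fin m → ℝ) :
    V ⬝ᵥ ((G X V + XiG G X V) *ᵥ A + xiG G X V) = 1 / 2 * (2 * (V ⬝ᵥ G X V *ᵥ A)
      + V ⬝ᵥ (entrywiseFDeriv (fun y => G y V) X V + entrywiseFDeriv (G X) V A) *ᵥ V) := by
  simp only [add_mulVec, dotProduct_add]
  rw [dotProduct_XiG_mulVec, dotProduct_xiG G hG]
  ring

end GDS

theorem stmt8 {m : ℕ}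
    (G : (Fin m → ℝ) → (Fin m → ℝ) → Matrix (Fin m) (Fin m) ℝ)
    (hG : ∀ i j, ContDiff ℝ 1 (fun p : (Fin m → ℝ) × (Fin m → ℝ) => G p.1 p.2 i j))
    (hGsym : ∀ x v, (G x v).IsSymm)
    (x : ℝ → Fin m → ℝ) (hx : ContDiff ℝ 2 x)
    -- force-free GDS equation of motion along the trajectory:
    (heq : ∀ t,
      (G (x t) (deriv x t) + XiG G (x t) (deriv x t)).mulVec (deriv (deriv x) t)
        + xiG G (x t) (deriv x t) = 0) :
    ∀ t, HasDerivAt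
      (fun s => (1 / 2) * (deriv x s ⬝ᵥ (G (x s) (deriv x s)).mulVec (deriv x s)))
      0 t := by
  intro t
  have hxd : Differentiable ℝ x := hx.differentiable two_ne_zero
  have hdxd : Differentiable ℝ (deriv x) :=
    (hx.iterate_deriv' 1 1).differentiable one_ne_zero
  have hGd : ∀ i j, Differentiable ℝ (fun p : (Fin m → ℝ) × (Fin m → ℝ) => G p.1 p.2 i j) :=
    fun i j => (hG i j).differentiable one_ne_zero
  have hGt : ∀ i j, HasDerivAt (fun s => G (x s) (deriv x s) i j)
      ((entrywiseFDeriv (fun y => G y (deriv x t)) (x t) (deriv x t)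
        + entrywiseFDeriv (G (x t)) (deriv x t) (deriv (deriv x) t)) i j) t :=
    fun i j => (hGd i j _).hasDerivAt_comp_prodMk (hxd t).hasDerivAt (hdxd t).hasDerivAt
  have hK := (HasDerivAt.dotProduct_mulVec_self hGt (hdxd t).hasDerivAt (hGsym _ _)).const_mul
    (1 / 2 : ℝ)
  refine hK.congr_deriv ?_
  rw [← dotProduct_gds_eq_energyRate G fun i j => (hGd i j _).comp _ (differentiableAt_id.prodMk
    (differentiableAt_const _)), heq t, dotProduct_zero]
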